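/- arXiv:2310.13372 — 3 statements merged into one kernel-verified Lean document; each statement's English description precedes it below -/
import Mathlib

section
/- Given an adjoint triple L ⊣ F ⊣ R between categories, the functor L is fully faithful if and only if R is fully faithful. -/
open CategoryTheory

universe v₁ v₂ u₁ u₂

lemma CategoryTheory.Functor.full_and_faithful_iff_nonempty_fullyFaithful {C D : Type*}
    [Category C] [Category D] (G : C ⥤ D) : (G.Full ∧ G.Faithful) ↔ Nonempty G.FullyFaithful :=
  ⟨fun ⟨_, _⟩ ↦ ⟨.ofFullyFaithful G⟩, fun ⟨hG⟩ ↦ ⟨hG.full, hG.faithful⟩⟩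

/-- Given an adjoint triple `L ⊣ F ⊣ R`, the functor `L` is fully faithful iff `R` is. -/
theorem stmt3 {A : Type u₁} [Category.{v₁} A] {B : Type u₂} [Category.{v₂} B]
    (L : A ⥤ B) (F : B ⥤ A) (R : A ⥤ B) (adj₁ : L ⊣ F) (adj₂ : F ⊣ R) :
    (L.Full ∧ L.Faithful) ↔ (R.Full ∧ R.Faithful) := by
  simp only [Functor.full_and_faithful_iff_nonempty_fullyFaithful]
  exact (Adjunction.Triple.mk adj₁ adj₂).fullyFaithfulEquiv.nonempty_congr
end

section
/- Let L ⊣ R be an adjunction between categories with R fully faithful, and let W be the class of morphisms inverted by L. Then L exhibits its codomain as the localization of its domain at W; in particular a morphism f is inverted by L if and only if for every object X in the essential image of R, precomposition with f induces a bijection of hom-sets into X. -/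
/-!
The adjunction conjugates precomposition with `f` on maps `B ⟶ R Y` to precomposition with
`L.map f` on maps `L B ⟶ Y`; by the co-Yoneda lemma the latter is bijective for all `Y` exactly
when `L.map f` is invertible. Testing against `R Y` or against anything isomorphic to it is the
same, which turns the condition into locality with respect to the essential image of `R`.
-/

open CategoryTheory

universe v₁ v₂ u₁ u₂

namespace CategoryTheory.Adjunction

variable {C : Type u₁} [Category.{v₁} C] {D : Type u₂} [Category.{v₂} D]
  {L : C ⥤ D} {R : D ⥤ C}

lemma bijective_precomp_map_iff (adj : L ⊣ R) {A B : C} (f : A ⟶ B) (Y : D) :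
    Function.Bijective (fun g : L.obj B ⟶ Y => L.map f ≫ g) ↔
      Function.Bijective (fun g : B ⟶ R.obj Y => f ≫ g) := by
  have hconj : (fun g : B ⟶ R.obj Y => f ≫ g) =
      adj.homEquiv A Y ∘ (fun g : L.obj B ⟶ Y => L.map f ≫ g) ∘ (adj.homEquiv B Y).symm := by
    funext g
    simp [homEquiv_naturality_left]
  rw [hconj, Equiv.comp_bijective, Equiv.bijective_comp]

lemma isIso_map_iff_isLocal_essImage (adj : L ⊣ R) {A B : C} (f : A ⟶ B) :
    IsIso (L.map f) ↔ R.essImage.isLocal f := by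
  rw [isIso_iff_coyoneda_map_bijective, ← Functor.isoClosure_eq_essImage,
    ObjectProperty.isoClosure_isLocal]
  simp only [ObjectProperty.isLocal, Set.forall_mem_range]
  exact forall_congr' (adj.bijective_precomp_map_iff f)

end CategoryTheory.Adjunction

/-- Let `L ⊣ R` be an adjunction with `R` fully faithful (a reflective localization), and let
`W` be the class of morphisms inverted by `L`.  Then `L` exhibits `D` as the localization of
`C` at `W`, and a morphism `f` is inverted by `L` iff precomposition with `f` is a bijection
of hom-sets into every object in the essential image of `R`. -/
theorem stmt5 {C : Type u₁} [Category.{v₁} C] {D : Type u₂} [Category.{v₂} D]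
    (L : C ⥤ D) (R : D ⥤ C) (adj : L ⊣ R) [R.Full] [R.Faithful]
    (W : MorphismProperty C) (hW : ∀ ⦃A B : C⦄ (f : A ⟶ B), W f ↔ IsIso (L.map f)) :
    L.IsLocalization W ∧
      ∀ ⦃A B : C⦄ (f : A ⟶ B), IsIso (L.map f) ↔
        ∀ X : C, R.essImage X → Function.Bijective (fun g : B ⟶ X => f ≫ g) := by
  have hW_eq : W = (MorphismProperty.isomorphisms D).inverseImage L := by
    ext A B f
    exact hW f
  exact ⟨hW_eq ▸ adj.isLocalization, fun _ _ f => adj.isIso_map_iff_isLocal_essImage f⟩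
end

section
/- In a commutative square of right adjoints G' ∘ P = Q ∘ G where all four functors admit left adjoints F, F', P!, Q!, the induced Beck–Chevalley natural transformation P! ∘ F' → F ∘ Q! is an isomorphism if and only if the mate transformation Q ∘ G → G' ∘ P (which here is the identity) satisfies the corresponding base-change condition on representable objects, assuming all categories are presentable, the left adjoints preserve colimits, and the condition holds on a set of generators. -/
open CategoryTheory Limits

universe v u₁ u₂ u₃ u₄

/-- The closure of a set of objects under small colimits. -/
inductive ColimClosure {A : Type u₁} [Category.{v} A] (S : Set A) : A → Prop
  | of {X : A} : X ∈ S → ColimClosure S X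
  | colim {J : Type v} [SmallCategory J] (K : J ⥤ A) (c : Cocone K) (hc : IsColimit c)
      (h : ∀ j, ColimClosure S (K.obj j)) : ColimClosure S c.pt

namespace ColimClosure

variable {C : Type u₁} [Category.{v} C] {D : Type u₂} [Category.{v} D]
  {H K : C ⥤ D} [PreservesColimitsOfSize.{v, v} H] [PreservesColimitsOfSize.{v, v} K]

theorem isIso_app {S : Set C} (η : H ⟶ K) (hS : ∀ X ∈ S, IsIso (η.app X)) {X : C}
    (hX : ColimClosure S X) : IsIso (η.app X) := by
  induction hX with
  | of hX => exact hS _ hX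
  | colim L c hc _ ih =>
    have : ∀ j, IsIso ((Functor.whiskerLeft L η).app j) := ih
    have : IsIso (Functor.whiskerLeft L η) := NatIso.isIso_of_isIso_app _
    exact isIso_app_coconePt_of_preservesColimit L η c hc

theorem isIso_iff_isIso_app_of_generates {S : Set C} (hgen : ∀ X : C, ColimClosure S X)
    (η : H ⟶ K) : IsIso η ↔ ∀ X ∈ S, IsIso (η.app X) :=
  ⟨fun _ _ _ => inferInstance,
    fun hS => have := fun X => isIso_app η hS (hgen X); NatIso.isIso_of_isIso_app η⟩

end ColimClosure

theorem stmt15_general {A : Type u₁} [Category.{v} A] {A' : Type u₂} [Category.{v} A']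
    {B : Type u₃} [Category.{v} B] {B' : Type u₄} [Category.{v} B']
    (F : A ⥤ A') (G : A' ⥤ A) (adjF : F ⊣ G)
    (F' : B ⥤ B') (G' : B' ⥤ B) (adjF' : F' ⊣ G')
    (Pl : A ⥤ B) (P : B ⥤ A) (adjP : Pl ⊣ P)
    (Ql : A' ⥤ B') (Q : B' ⥤ A') (adjQ : Ql ⊣ Q)
    (S : Set A) (hgen : ∀ X : A, ColimClosure S X)
    (θ : Pl ⋙ F' ⟶ F ⋙ Ql) :
    IsIso θ ↔ ∀ X ∈ S, IsIso (θ.app X) := by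
  have := adjP.leftAdjoint_preservesColimits
  have := adjF'.leftAdjoint_preservesColimits
  have := adjF.leftAdjoint_preservesColimits
  have := adjQ.leftAdjoint_preservesColimits
  exact ColimClosure.isIso_iff_isIso_app_of_generates hgen θ

/-- In a commutative square of right adjoints `G' ∘ P ≅ Q ∘ G` in which all four functors
admit left adjoints `F`, `F'`, `P!`, `Q!`, the Beck–Chevalley transformation
`P! ∘ F' ⟶ F ∘ Q!` is an isomorphism iff it is an isomorphism on a set of objects generating
the source category under small colimits. -/
theorem stmt15 {A : Type u₁} [Category.{v} A] {A' : Type u₂} [Category.{v} A']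
    {B : Type u₃} [Category.{v} B] {B' : Type u₄} [Category.{v} B']
    (F : A ⥤ A') (G : A' ⥤ A) (adjF : F ⊣ G)
    (F' : B ⥤ B') (G' : B' ⥤ B) (adjF' : F' ⊣ G')
    (Pl : A ⥤ B) (P : B ⥤ A) (adjP : Pl ⊣ P)
    (Ql : A' ⥤ B') (Q : B' ⥤ A') (adjQ : Ql ⊣ Q)
    (e : G' ⋙ P ≅ Q ⋙ G)
    (S : Set A) (hgen : ∀ X : A, ColimClosure S X)
    (θ : Pl ⋙ F' ⟶ F ⋙ Ql)
    (hθ : ∀ X : A, θ.app X =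
      (adjF'.homEquiv (Pl.obj X) (Ql.obj (F.obj X))).symm
        ((adjP.homEquiv X (G'.obj (Ql.obj (F.obj X)))).symm
          (adjF.unit.app X ≫ G.map (adjQ.unit.app (F.obj X)) ≫
            e.inv.app (Ql.obj (F.obj X))))) :
    IsIso θ ↔ ∀ X ∈ S, IsIso (θ.app X) :=
  stmt15_general F G adjF F' G' adjF' Pl P adjP Ql Q adjQ S hgen θ
end
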